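/- Let A_{j-1} : ℝ → ℝ be a convex continuous piecewise linear function. Then for any d ∈ ℝ, the function z ↦ min_{w ∈ ℝ} (|w − z − d| + A_{j-1}(w)) is convex, continuous, and piecewise linear; moreover if A_{j-1} has k linear pieces then this function has at most k+1 pieces. -/

import Mathlib

/-!
Write `H x = ⨅ w, |w - x| + f w`, so that the function of the theorem is `z ↦ H (z + d)`.
`H` is convex, as a partial minimum of the jointly convex `(w, x) ↦ |w - x| + f w`, and it is
1-Lipschitz. On an interval where `f` is affine with slope `s`, so is `H`: if `|s| ≤ 1` then
`H = f` there, since the affine function is a global minorant of `f` with slope in `[-1, 1]`;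
if `s ≤ -1` (resp. `1 ≤ s`) then moving `x` to the right (resp. left) end of the interval
costs exactly the distance travelled, so `H` has slope `-1` (resp. `1`) there. Hence `H` is
piecewise linear with the same breakpoints as `f`.
-/

/-- `f : ℝ → ℝ` is piecewise linear with (at most) `k` pieces: there are breakpoints
`⊥ = a 0 ≤ a 1 ≤ ⋯ ≤ a k = ⊤` (in `EReal`) such that `f` is affine on each of the `k`
intervals they delimit. -/
def PWL (k : ℕ) (f : ℝ → ℝ) : Prop :=
  ∃ (a : Fin (k + 1) → EReal) (s c : Fin k → ℝ),
    Monotone a ∧ a 0 = ⊥ ∧ a (Fin.last k) = ⊤ ∧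
    ∀ (i : Fin k) (z : ℝ), a i.castSucc ≤ (z : EReal) → (z : EReal) ≤ a i.succ →
      f z = s i * z + c i

open Set

def AffineOn (f : ℝ → ℝ) (I : Set ℝ) : Prop :=
  ∃ s c : ℝ, ∀ x ∈ I, f x = s * x + c

theorem Set.Subsingleton.affineOn {I : Set ℝ} (hI : I.Subsingleton) (g : ℝ → ℝ) :
    AffineOn g I := by
  rcases I.eq_empty_or_nonempty with rfl | ⟨x₀, hx₀⟩
  · exact ⟨0, 0, fun x hx => hx.elim⟩
  · exact ⟨0, g x₀, fun x hx => by rw [hI hx hx₀]; ring⟩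

namespace PWL

theorem of_affineOn {k : ℕ} {f g : ℝ → ℝ} (hf : PWL k f)
    (h : ∀ I : Set ℝ, I.OrdConnected → AffineOn f I → AffineOn g I) : PWL k g := by
  obtain ⟨a, s, c, ha, ha₀, ha_last, hfa⟩ := hf
  have piece (i : Fin k) :
      AffineOn g ((fun z : ℝ => (z : EReal)) ⁻¹' Icc (a i.castSucc) (a i.succ)) :=
    h _ (ordConnected_Icc.preimage_mono EReal.coe_strictMono.monotone)
      ⟨s i, c i, fun z hz => hfa i z hz.1 hz.2⟩
  choose s' c' hg using piece
  exact ⟨a, s', c', ha, ha₀, ha_last, fun i z h₁ h₂ => hg i z ⟨h₁, h₂⟩⟩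

theorem comp_add_right {k : ℕ} {f : ℝ → ℝ} (hf : PWL k f) (d : ℝ) :
    PWL k (fun z => f (z + d)) := by
  obtain ⟨a, s, c, ha, ha₀, ha_last, hfa⟩ := hf
  refine ⟨fun i => a i - d, s, fun i => s i * d + c i,
    fun i j hij => EReal.sub_le_sub (ha hij) le_rfl, by simp [ha₀], by simp [ha_last],
    fun i z h₁ h₂ => ?_⟩
  have hd : (d : EReal) ≠ ⊥ := EReal.coe_ne_bot d
  have hd' : (d : EReal) ≠ ⊤ := EReal.coe_ne_top d
  rw [EReal.sub_le_iff_le_add (.inl hd) (.inl hd'), ← EReal.coe_add] at h₁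
  rw [EReal.le_sub_iff_add_le (.inl hd) (.inl hd'), ← EReal.coe_add] at h₂
  simp only [hfa i (z + d) h₁ h₂]
  ring

theorem succ {k : ℕ} {f : ℝ → ℝ} (hf : PWL k f) : PWL (k + 1) f := by
  obtain ⟨a, s, c, ha, ha₀, ha_last, hfa⟩ := hf
  -- prepend the empty piece `[⊥, ⊥]`
  refine ⟨Fin.cons ⊥ a, Fin.cons 0 s, Fin.cons 0 c, ?_, rfl, ?_, ?_⟩
  · exact monotone_vecCons.2 ⟨bot_le, ha⟩
  · rw [← Fin.succ_last, Fin.cons_succ, ha_last]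
  · intro i
    refine Fin.cases (fun z _ h => ?_) (fun i z h₁ h₂ => ?_) i
    · simp [ha₀] at h
    · simpa using hfa i z (by simpa using h₁) (by simpa using h₂)

end PWL

theorem ConvexOn.affine_le_of_eqOn_Icc {f : ℝ → ℝ} (hf : ConvexOn ℝ univ f) {u v s c : ℝ}
    (huv : u < v) (hfuv : ∀ x ∈ Icc u v, f x = s * x + c) (w : ℝ) : s * w + c ≤ f w := by
  have hu := hfuv u ⟨le_rfl, huv.le⟩
  have hv := hfuv v ⟨huv.le, le_rfl⟩
  have hslope : (f v - f u) / (v - u) = s := by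
    rw [hu, hv, div_eq_iff (sub_ne_zero.2 huv.ne')]
    ring
  rcases lt_or_ge w u with hwu | huw
  · have h := hf.slope_mono_adjacent (mem_univ w) (mem_univ v) hwu huv
    rw [hslope, div_le_iff₀ (by linarith)] at h
    nlinarith
  rcases le_or_gt w v with hwv | hvw
  · exact (hfuv w ⟨huw, hwv⟩).ge
  · have h := hf.slope_mono_adjacent (mem_univ u) (mem_univ w) huv hvw
    rw [hslope, le_div_iff₀ (by linarith)] at h
    nlinarith

/-- Where the infimum is not bounded below, `⨅` returns the junk value `0`; hence the
`BddBelow` hypotheses below. -/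
noncomputable def infConvAbs (f : ℝ → ℝ) (x : ℝ) : ℝ :=
  ⨅ w, |w - x| + f w

section infConvAbs

variable {f : ℝ → ℝ}

theorem infConvAbs_le (hb : ∀ x, BddBelow (range fun w => |w - x| + f w)) (x w : ℝ) :
    infConvAbs f x ≤ |w - x| + f w :=
  ciInf_le (hb x) w

theorem infConvAbs_le_self (hb : ∀ x, BddBelow (range fun w => |w - x| + f w)) (x : ℝ) :
    infConvAbs f x ≤ f x := by
  simpa using infConvAbs_le hb x x

theorem infConvAbs_le_add (hb : ∀ x, BddBelow (range fun w => |w - x| + f w)) (x y : ℝ) :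
    infConvAbs f x ≤ infConvAbs f y + |x - y| := by
  rw [← sub_le_iff_le_add]
  refine le_ciInf fun w => ?_
  have h₁ := infConvAbs_le hb x w
  have h₂ := abs_sub_le w y x
  rw [abs_sub_comm y x] at h₂
  linarith

theorem lipschitzWith_infConvAbs (hb : ∀ x, BddBelow (range fun w => |w - x| + f w)) :
    LipschitzWith 1 (infConvAbs f) :=
  LipschitzWith.of_le_add fun x y => by
    simpa only [Real.dist_eq] using infConvAbs_le_add hb x y

theorem affine_le_infConvAbs {σ c : ℝ} (hσ : |σ| ≤ 1) (hmin : ∀ w, σ * w + c ≤ f w)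
    (x : ℝ) : σ * x + c ≤ infConvAbs f x :=
  le_ciInf fun w => by
    have h : σ * (x - w) ≤ |w - x| := (le_abs_self _).trans <| by
      rw [abs_mul, abs_sub_comm]; exact mul_le_of_le_one_left (abs_nonneg _) hσ
    rw [mul_sub] at h
    linarith [hmin w]

theorem infConvAbs_eq_of_slope_le_neg_one (hb : ∀ x, BddBelow (range fun w => |w - x| + f w))
    {s c x y : ℝ} (hs : s ≤ -1) (hmin : ∀ w, s * w + c ≤ f w) (hy : f y = s * y + c)
    (hxy : x ≤ y) : infConvAbs f x = infConvAbs f y + (y - x) := by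
  refine le_antisymm ?_ (le_ciInf fun w => ?_)
  · simpa [abs_of_nonpos (sub_nonpos.2 hxy)] using infConvAbs_le_add hb x y
  rcases le_total y w with hyw | hwy
  · have h := infConvAbs_le hb y w
    rw [abs_of_nonneg (sub_nonneg.2 hyw)] at h
    rw [abs_of_nonneg (by linarith)]
    linarith
  · have h := infConvAbs_le_self hb y
    nlinarith [hmin w, le_abs_self (w - x), mul_nonneg (neg_nonneg.2 (by linarith : s + 1 ≤ 0))
      (sub_nonneg.2 hwy)]

theorem infConvAbs_eq_of_one_le_slope (hb : ∀ x, BddBelow (range fun w => |w - x| + f w))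
    {s c x y : ℝ} (hs : 1 ≤ s) (hmin : ∀ w, s * w + c ≤ f w) (hx : f x = s * x + c)
    (hxy : x ≤ y) : infConvAbs f y = infConvAbs f x + (y - x) := by
  refine le_antisymm ?_ (le_ciInf fun w => ?_)
  · simpa [abs_of_nonneg (sub_nonneg.2 hxy)] using infConvAbs_le_add hb y x
  rcases le_total w x with hwx | hxw
  · have h := infConvAbs_le hb x w
    rw [abs_of_nonpos (sub_nonpos.2 hwx)] at h
    rw [abs_of_nonpos (by linarith)]
    linarith
  · have h := infConvAbs_le_self hb x
    nlinarith [hmin w, neg_abs_le (w - y), mul_nonneg (sub_nonneg.2 hs) (sub_nonneg.2 hxw)]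

theorem ConvexOn.affineOn_infConvAbs (hf : ConvexOn ℝ univ f)
    (hb : ∀ x, BddBelow (range fun w => |w - x| + f w)) {I : Set ℝ} (hI : I.OrdConnected)
    (h : AffineOn f I) : AffineOn (infConvAbs f) I := by
  obtain ⟨s, c, hfI⟩ := h
  rcases I.subsingleton_or_nontrivial with hI₁ | hI₂
  · exact hI₁.affineOn _
  obtain ⟨u, hu, v, hv, huv⟩ := hI₂.exists_lt
  have hmin := hf.affine_le_of_eqOn_Icc huv fun x hx => hfI x (hI.out hu hv hx)
  by_cases hs₁ : s ≤ -1
  · refine ⟨-1, infConvAbs f u + u, fun x hx => ?_⟩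
    rcases le_total x u with hxu | hux
    · linarith [infConvAbs_eq_of_slope_le_neg_one hb hs₁ hmin (hfI u hu) hxu]
    · linarith [infConvAbs_eq_of_slope_le_neg_one hb hs₁ hmin (hfI x hx) hux]
  by_cases hs₂ : 1 ≤ s
  · refine ⟨1, infConvAbs f u - u, fun x hx => ?_⟩
    rcases le_total x u with hxu | hux
    · linarith [infConvAbs_eq_of_one_le_slope hb hs₂ hmin (hfI x hx) hxu]
    · linarith [infConvAbs_eq_of_one_le_slope hb hs₂ hmin (hfI u hu) hux]
  have hs : |s| ≤ 1 := abs_le.2 ⟨by linarith, by linarith⟩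
  exact ⟨s, c, fun x hx => le_antisymm ((infConvAbs_le_self hb x).trans (hfI x hx).le)
    (affine_le_infConvAbs hs hmin x)⟩

theorem ConvexOn.convexOn_infConvAbs (hf : ConvexOn ℝ univ f)
    (hb : ∀ x, BddBelow (range fun w => |w - x| + f w)) : ConvexOn ℝ univ (infConvAbs f) := by
  refine ⟨convex_univ, fun x _ y _ α β hα hβ hαβ => ?_⟩
  have key (w₁ w₂ : ℝ) : infConvAbs f (α • x + β • y) ≤
      α * (|w₁ - x| + f w₁) + β * (|w₂ - y| + f w₂) := by
    have habs :
        |α * w₁ + β * w₂ - (α * x + β * y)| ≤ α * |w₁ - x| + β * |w₂ - y| := by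
      calc |α * w₁ + β * w₂ - (α * x + β * y)|
          = |α * (w₁ - x) + β * (w₂ - y)| := by ring_nf
        _ ≤ |α * (w₁ - x)| + |β * (w₂ - y)| := abs_add_le _ _
        _ = α * |w₁ - x| + β * |w₂ - y| := by
          rw [abs_mul, abs_mul, abs_of_nonneg hα, abs_of_nonneg hβ]
    have hfc := hf.2 (mem_univ w₁) (mem_univ w₂) hα hβ hαβ
    simp only [smul_eq_mul] at hfc ⊢
    linarith [infConvAbs_le hb (α * x + β * y) (α * w₁ + β * w₂)]
  calc infConvAbs f (α • x + β • y)
      ≤ (⨅ w₁, α * (|w₁ - x| + f w₁)) + ⨅ w₂, β * (|w₂ - y| + f w₂) :=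
        le_ciInf_add_ciInf key
    _ = α • infConvAbs f x + β • infConvAbs f y := by
      rw [smul_eq_mul, smul_eq_mul, infConvAbs, infConvAbs,
        Real.mul_iInf_of_nonneg hα, Real.mul_iInf_of_nonneg hβ]

end infConvAbs

theorem stmt8 (k : ℕ) (f : ℝ → ℝ) (hconv : ConvexOn ℝ Set.univ f)
    (hpwl : PWL k f) (d : ℝ)
    (hfin : ∀ z : ℝ, BddBelow (Set.range fun w => |w - z - d| + f w)) :
    ConvexOn ℝ Set.univ (fun z : ℝ => ⨅ w : ℝ, (|w - z - d| + f w)) ∧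
    Continuous (fun z : ℝ => ⨅ w : ℝ, (|w - z - d| + f w)) ∧
    PWL (k + 1) (fun z : ℝ => ⨅ w : ℝ, (|w - z - d| + f w)) := by
  have hb (x : ℝ) : BddBelow (range fun w => |w - x| + f w) := by
    simpa [sub_sub] using hfin (x - d)
  have hg : (fun z : ℝ => ⨅ w : ℝ, (|w - z - d| + f w)) = fun z => infConvAbs f (z + d) := by
    simp only [infConvAbs, sub_sub]
  rw [hg]
  refine ⟨?_, (lipschitzWith_infConvAbs hb).continuous.comp (continuous_add_const d),
    ((hpwl.of_affineOn fun _ hI h => hconv.affineOn_infConvAbs hb hI h).comp_add_right d).succ⟩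
  have h := (hconv.convexOn_infConvAbs hb).translate_left d
  rw [preimage_univ] at h
  exact h
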